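/- Define, for each integer N ≥ 1, S(N) = (2/(N+2))·√(6/((N+1)(N+3)))·Σ_m m·sin(π m/(N+2)), where the sum runs over integers m with 1 ≤ m ≤ N+1 and m ≡ N+1 (mod 2). Then S(2) = 2/√5, and for every integer N ≥ 2 one has S(N) ≤ S(2). -/

import Mathlib

/-!
A two-step recursion in `N` gives, for every `θ`,
`2 sin²θ · Σ_m m sin(mθ) = sin((N+2)θ) cos θ - (N+2) cos((N+2)θ) sin θ`,
which at `θ = π/(N+2)` collapses the sum to `(N+2) / (2 sin(π/(N+2)))`, so that
`S(N) = √(6 / ((N+1)(N+3) sin²(π/(N+2))))`. With `L = N + 2` the claim becomes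
`(L² - 1) sin²(π/L) ≥ 15/2`, an equality at `L = 4`; for `L ≥ 5` it follows from
`sin x > x - x³/6`.
-/

open Finset Filter

/-- The square-root fidelity between the optimal resource states of
probabilistic and deterministic qubit PBT with `N` ports:
`S(N) = (2/(N+2))·√(6/((N+1)(N+3)))·Σ_m m·sin(π m/(N+2))`,
the sum over integers `1 ≤ m ≤ N+1` with `m ≡ N+1 (mod 2)`. -/
noncomputable def Sfid (N : ℕ) : ℝ :=
  (2 / ((N : ℝ) + 2)) * Real.sqrt (6 / (((N : ℝ) + 1) * ((N : ℝ) + 3))) *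
    ∑ m ∈ (Finset.Icc 1 (N + 1)).filter (fun m => m % 2 = (N + 1) % 2),
      (m : ℝ) * Real.sin (Real.pi * m / ((N : ℝ) + 2))

open Real

def spinLabels (N : ℕ) : Finset ℕ :=
  (Icc 1 (N + 1)).filter (fun m => m % 2 = (N + 1) % 2)

lemma spinLabels_add_two (n : ℕ) : spinLabels (n + 2) = insert (n + 3) (spinLabels n) := by
  ext m
  simp only [spinLabels, mem_filter, mem_Icc, mem_insert]
  omega

lemma add_three_notMem_spinLabels (n : ℕ) : n + 3 ∉ spinLabels n := by
  simp only [spinLabels, mem_filter, mem_Icc]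
  omega

lemma two_mul_sin_sq_mul_sum_spinLabels (θ : ℝ) (N : ℕ) :
    2 * sin θ ^ 2 * ∑ m ∈ spinLabels N, (m : ℝ) * sin (m * θ)
      = sin ((N + 2) * θ) * cos θ - (N + 2) * cos ((N + 2) * θ) * sin θ := by
  induction N using Nat.twoStepInduction with
  | zero =>
    simp only [show spinLabels 0 = {1} from rfl, sum_singleton, Nat.cast_zero, Nat.cast_one,
      one_mul, zero_add, two_mul θ, sin_add, cos_add]
    ring
  | one =>
    rw [show spinLabels 1 = {2} from rfl, sum_singleton, Nat.cast_one, Nat.cast_ofNat,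
      show (1 + 2 : ℝ) * θ = θ + θ + θ by ring, two_mul θ]
    simp only [sin_add, cos_add]
    ring
  | more n ih _ =>
    rw [spinLabels_add_two, sum_insert (add_three_notMem_spinLabels n)]
    rw [show ((n : ℝ) + 2) * θ = (n + 3) * θ - θ by ring, sin_sub, cos_sub] at ih
    push_cast
    rw [show ((n : ℝ) + 2 + 2) * θ = (n + 3) * θ + θ by ring, sin_add, cos_add]
    linear_combination ih

lemma sin_pi_div_pos {L : ℝ} (hL : 1 < L) : 0 < sin (π / L) :=
  sin_pos_of_pos_of_lt_pi (by positivity) (div_lt_self pi_pos hL)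

lemma sum_spinLabels_mul_sin (N : ℕ) :
    ∑ m ∈ spinLabels N, (m : ℝ) * sin (π * m / (N + 2))
      = (N + 2) / (2 * sin (π / (N + 2))) := by
  have hL : (0 : ℝ) < N + 2 := by positivity
  have hs := sin_pi_div_pos (L := N + 2) (by linarith)
  have key := two_mul_sin_sq_mul_sum_spinLabels (π / (N + 2)) N
  rw [mul_div_cancel₀ _ hL.ne', sin_pi, cos_pi] at key
  simp_rw [show ∀ m : ℕ, π * m / (N + 2) = m * (π / (N + 2)) from fun m => by ring]
  rw [eq_div_iff (by positivity)]
  exact (mul_right_inj' hs.ne').1 (by linear_combination key)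

lemma Sfid_eq_sqrt (N : ℕ) :
    Sfid N = √(6 / ((N + 1) * (N + 3) * sin (π / (N + 2)) ^ 2)) := by
  have hs := sin_pi_div_pos (L := N + 2) (by linarith)
  rw [Sfid, ← spinLabels, sum_spinLabels_mul_sin,
    ← div_div (6 : ℝ) (((N : ℝ) + 1) * (N + 3)), sqrt_div' _ (sq_nonneg _), sqrt_sq hs.le]
  field_simp

lemma fifteen_div_two_le_sq_sub_one_mul_sin_sq {L : ℝ} (hL : 5 ≤ L) :
    15 / 2 ≤ (L ^ 2 - 1) * sin (π / L) ^ 2 := by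
  set θ := π / L
  have hθL : θ * L = π := div_mul_cancel₀ _ (by positivity)
  have hθ : 0 < θ := by positivity
  have hθ_le : θ ≤ π / 5 := div_le_div_of_nonneg_left pi_pos.le (by norm_num) hL
  have hθ_sq : θ ^ 2 ≤ π ^ 2 / 25 := by
    rw [show π ^ 2 / 25 = (π / 5) ^ 2 by ring]
    gcongr
  have hπ_sq : 9.85 ≤ π ^ 2 ∧ π ^ 2 ≤ 9.93 := by
    constructor <;> nlinarith [pi_gt_d2, pi_lt_d2]
  have hLsin : π * (1 - π ^ 2 / 150) ≤ L * sin θ :=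
    calc π * (1 - π ^ 2 / 150) ≤ π * (1 - θ ^ 2 / 6) :=
          mul_le_mul_of_nonneg_left (by linarith) pi_pos.le
      _ = L * (θ - θ ^ 3 / 6) := by rw [← hθL]; ring
      _ ≤ L * sin θ := by gcongr; exact (sin_gt_sub_cube hθ).le
  calc 15 / 2 ≤ 24 / 25 * (π * (1 - π ^ 2 / 150)) ^ 2 := by
        rw [mul_pow]; nlinarith [mul_le_mul hπ_sq.1 hπ_sq.1]
    _ ≤ 24 / 25 * (L * sin θ) ^ 2 := by gcongr; nlinarith [pi_pos]
    _ ≤ (L ^ 2 - 1) * sin θ ^ 2 := by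
        have hL_sq : 0 ≤ L ^ 2 / 25 - 1 := by nlinarith
        nlinarith [mul_nonneg hL_sq (sq_nonneg (sin θ))]

/-- `S(2) = 2/√5`, and `S(N) ≤ S(2)` for every `N ≥ 2`. -/
theorem Sfid_max_at_two :
    Sfid 2 = 2 / Real.sqrt 5 ∧ ∀ N : ℕ, 2 ≤ N → Sfid N ≤ Sfid 2 := by
  have h2 : Sfid 2 = √(4 / 5) := by
    rw [Sfid_eq_sqrt]
    norm_num [sin_pi_div_four, div_pow]
  refine ⟨?_, fun N hN => ?_⟩
  · rw [h2, sqrt_div' _ (by norm_num), show (4 : ℝ) = 2 ^ 2 by norm_num, sqrt_sq zero_le_two]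
  rcases hN.eq_or_lt with rfl | hN
  · rfl
  have h3 : (3 : ℝ) ≤ N := by exact_mod_cast hN
  have hsin := fifteen_div_two_le_sq_sub_one_mul_sin_sq (L := N + 2) (by linarith)
  have hs := sin_pi_div_pos (L := N + 2) (by linarith)
  rw [h2, Sfid_eq_sqrt]
  refine sqrt_le_sqrt ((div_le_iff₀ (by positivity)).2 ?_)
  linear_combination (4 / 5) * hsin
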